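/- arXiv:2601.15680 — 4 statements merged into one kernel-verified Lean document; each statement's English description precedes it below -/
import Mathlib

section
/- For all integers n ≥ 0 and all integers k ≥ j ≥ 0, both a_{3(k-j)+3, 3k+6}(3n+1) ≡ 0 (mod 3) and a_{3(k-j)+3, 3k+6}(3n+2) ≡ 0 (mod 3). -/
/-!
In characteristic `p` the Frobenius gives `(∑ aᵢ Xⁱ)^p = ∑ aᵢ^p X^{pi}`, so a `p`-th power of a
power series has no terms `Xⁿ` with `p ∤ n`. When both color counts are multiples of `p`, the
generating function of `a_{r,s}` is a `p`-th power, hence `a_{pr,ps}(n) ≡ 0 (mod p)` for `p ∤ n`.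
-/

/-- `colorPart r s n` is the number `a_{r,s}(n)` of partitions of `n` in which even parts
may appear in any of `r` colors and odd parts in any of `s` colors, realized as the
coefficient of `q^n` in `∏_{m ≥ 1} (1 - q^{2m-1})^{-s} (1 - q^{2m})^{-r}`.  Since the
factors with `2m - 1 > n` do not affect the coefficient of `q^n`, this coefficient equals
the coefficient of `q^n` in the finite product of the factors for `1 ≤ m ≤ n + 1`. -/
noncomputable def colorPart (r s n : ℕ) : ℤ :=
  PowerSeries.coeff (R := ℤ) n
    (∏ m ∈ Finset.range (n + 1),
      (PowerSeries.invOfUnit (1 - PowerSeries.X ^ (2 * m + 1)) 1) ^ s *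
      (PowerSeries.invOfUnit (1 - PowerSeries.X ^ (2 * m + 2)) 1) ^ r)

open PowerSeries

theorem PowerSeries.coeff_pow_expChar_of_not_dvd {R : Type*} [CommRing R] {p : ℕ} [ExpChar R p]
    (f : PowerSeries R) {n : ℕ} (hn : ¬ p ∣ n) : coeff n (f ^ p) = 0 := by
  have hp : p ≠ 0 := expChar_ne_zero R p
  rw [← MvPowerSeries.map_frobenius_expand p hp]
  change frobenius R p (coeff n (expand p hp f)) = 0
  rw [coeff_expand_of_not_dvd p hp f hn, map_zero]

theorem colorPart_mul_eq_coeff_pow (p r s n : ℕ) :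
    colorPart (p * r) (p * s) n = coeff n ((∏ m ∈ Finset.range (n + 1),
      (invOfUnit (1 - X ^ (2 * m + 1)) 1) ^ s * (invOfUnit (1 - X ^ (2 * m + 2)) 1) ^ r) ^ p) := by
  simp only [colorPart, ← Finset.prod_pow, mul_pow, ← pow_mul, mul_comm p]

theorem colorPart_mul_modEq_zero {p : ℕ} [Fact p.Prime] (r s : ℕ) {n : ℕ} (hn : ¬ p ∣ n) :
    colorPart (p * r) (p * s) n ≡ 0 [ZMOD p] := by
  rw [← ZMod.intCast_eq_intCast_iff, Int.cast_zero, colorPart_mul_eq_coeff_pow,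
    ← eq_intCast (Int.castRingHom (ZMod p)), ← coeff_map, map_pow]
  exact coeff_pow_expChar_of_not_dvd _ hn

theorem colorPart_cong_stmt0_general (n j k : ℕ) :
    colorPart (3 * (k - j) + 3) (3 * k + 6) (3 * n + 1) ≡ 0 [ZMOD 3] ∧
    colorPart (3 * (k - j) + 3) (3 * k + 6) (3 * n + 2) ≡ 0 [ZMOD 3] := by
  rw [show 3 * (k - j) + 3 = 3 * (k - j + 1) by ring, show 3 * k + 6 = 3 * (k + 2) by ring]
  exact ⟨colorPart_mul_modEq_zero (p := 3) _ _ (by omega),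
    colorPart_mul_modEq_zero (p := 3) _ _ (by omega)⟩

theorem colorPart_cong_stmt0 (n j k : ℕ) (hjk : j ≤ k) :
    colorPart (3 * (k - j) + 3) (3 * k + 6) (3 * n + 1) ≡ 0 [ZMOD 3] ∧
    colorPart (3 * (k - j) + 3) (3 * k + 6) (3 * n + 2) ≡ 0 [ZMOD 3] :=
  colorPart_cong_stmt0_general n j k
end

section
/- For all integers n ≥ 0, a_{2,4}(27n) ≡ a_{2,4}(3n) (mod 3). -/
open Finset PowerSeries

theorem dvd_prod_sub_prod {R ι : Type*} [CommRing R] {s : Finset ι} {f g : ι → R} {x : R}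
    (h : ∀ i ∈ s, x ∣ f i - g i) : x ∣ ∏ i ∈ s, f i - ∏ i ∈ s, g i := by
  simp_rw [← Ideal.mem_span_singleton, ← SModEq.sub_mem] at h ⊢
  exact SModEq.prod h

theorem pow_succ_dvd_prod_range_add_sub {R : Type*} [CommRing R] {x : R} {f : ℕ → R}
    (hf : ∀ m, x ^ (m + 1) ∣ f m - 1) (L c : ℕ) :
    x ^ (L + 1) ∣ ∏ m ∈ range (L + c), f m - ∏ m ∈ range L, f m := by
  rw [prod_range_add, ← mul_sub_one]
  refine dvd_mul_of_dvd_right ?_ _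
  simpa using dvd_prod_sub_prod (s := range c) (g := fun _ => 1)
    fun i _ => (pow_dvd_pow x (by omega)).trans (hf (L + i))

lemma choose_two_succ (j : ℕ) : (j + 1).choose 2 = j.choose 2 + j := by
  rw [Nat.choose_succ_succ', Nat.choose_one_right, add_comm]

lemma two_mul_choose_two_add_self (j : ℕ) : 2 * j.choose 2 + j = j * j := by
  induction j with
  | zero => rfl
  | succ j ih => rw [choose_two_succ]; linarith

section QBinomial

variable {R : Type*} [CommRing R] (q : R)

def qPochhammer (n : ℕ) : R := ∏ i ∈ range n, (1 - q ^ (i + 1))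

def qBinom : ℕ → ℕ → R
  | _, 0 => 1
  | 0, _ + 1 => 0
  | n + 1, k + 1 => q ^ (k + 1) * qBinom n (k + 1) + qBinom n k

@[simp] lemma qBinom_zero_right (n : ℕ) : qBinom q n 0 = 1 := by cases n <;> rfl

@[simp] lemma qBinom_zero_succ (k : ℕ) : qBinom q 0 (k + 1) = 0 := rfl

lemma qBinom_succ_succ (n k : ℕ) :
    qBinom q (n + 1) (k + 1) = q ^ (k + 1) * qBinom q n (k + 1) + qBinom q n k := rfl

lemma qBinom_eq_zero_of_lt {n k : ℕ} (h : n < k) : qBinom q n k = 0 := by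
  induction n generalizing k with
  | zero => obtain ⟨k, rfl⟩ := Nat.exists_eq_add_of_lt h; simp
  | succ n ih =>
    obtain ⟨k, rfl⟩ := Nat.exists_eq_add_of_lt (Nat.zero_lt_of_lt h)
    rw [qBinom_succ_succ, ih (by omega), ih (by omega), mul_zero, add_zero]

@[simp] lemma qBinom_self (n : ℕ) : qBinom q n n = 1 := by
  induction n with
  | zero => rfl
  | succ n ih => rw [qBinom_succ_succ, qBinom_eq_zero_of_lt q n.lt_succ_self, ih]; ring

lemma qPochhammer_succ (n : ℕ) : qPochhammer q (n + 1) = qPochhammer q n * (1 - q ^ (n + 1)) :=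
  prod_range_succ _ n

lemma qBinom_add_mul_qPochhammer (a b : ℕ) :
    qBinom q (a + b) a * qPochhammer q a * qPochhammer q b = qPochhammer q (a + b) := by
  induction a generalizing b with
  | zero => simp [qPochhammer]
  | succ a iha =>
    induction b with
    | zero => simp [qPochhammer]
    | succ b ihb =>
      have h := iha (b + 1)
      rw [show a + (b + 1) = a + 1 + b by ring, qPochhammer_succ q b] at h
      rw [qPochhammer_succ q a] at ihb
      rw [show a + 1 + (b + 1) = a + 1 + b + 1 by ring, qBinom_succ_succ,
        qPochhammer_succ q (a + 1 + b), qPochhammer_succ q a, qPochhammer_succ q b]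
      linear_combination q ^ (a + 1) * (1 - q ^ (b + 1)) * ihb + (1 - q ^ (a + 1)) * h

lemma pow_dvd_qPochhammer_mul_qBinom_sub_one {a b c : ℕ} (hc : min a b ≤ c)
    (hu : IsUnit (qPochhammer q a * qPochhammer q b)) :
    q ^ (min a b + 1) ∣ qPochhammer q c * qBinom q (a + b) a - 1 := by
  set m := min a b
  have hQ (n : ℕ) (hn : m ≤ n) : q ^ (m + 1) ∣ qPochhammer q n - qPochhammer q m := by
    obtain ⟨c, rfl⟩ := Nat.exists_eq_add_of_le hn
    exact pow_succ_dvd_prod_range_add_sub (fun i => by rw [sub_sub_cancel_left, dvd_neg]) m c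
  rw [← hu.dvd_mul_right]
  have e : (qPochhammer q c * qBinom q (a + b) a - 1) * (qPochhammer q a * qPochhammer q b) =
      (qPochhammer q c - qPochhammer q m) * qPochhammer q (a + b)
        + qPochhammer q m * (qPochhammer q (a + b) - qPochhammer q m)
        - (qPochhammer q a - qPochhammer q m) * qPochhammer q b
        - qPochhammer q m * (qPochhammer q b - qPochhammer q m) := by
    rw [← qBinom_add_mul_qPochhammer q a b]; ring
  rw [e]
  refine dvd_sub (dvd_sub (dvd_add ?_ ?_) ?_) ?_
  · exact (hQ c hc).mul_right _
  · exact (hQ (a + b) (by omega)).mul_left _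
  · exact (hQ a (min_le_left a b)).mul_right _
  · exact (hQ b (min_le_right a b)).mul_left _

/-- The q-binomial theorem, in homogeneous form. -/
theorem prod_add_mul_pow_eq_sum_qBinom (x y : R) (n : ℕ) :
    ∏ i ∈ range n, (x + y * q ^ i) =
      ∑ j ∈ range (n + 1), q ^ j.choose 2 * qBinom q n j * y ^ j * x ^ (n - j) := by
  induction n generalizing y with
  | zero => simp
  | succ n ih =>
    set g : ℕ → R := fun j => q ^ (j.choose 2 + j) * qBinom q n j * y ^ j * x ^ (n + 1 - j)
    set h : ℕ → R := fun j => q ^ (j.choose 2 + j) * qBinom q n j * y ^ (j + 1) * x ^ (n - j)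
    have hg : ∑ j ∈ range (n + 1), g j = ∑ j ∈ range (n + 1), g (j + 1) + g 0 := by
      rw [← sum_range_succ', sum_range_succ _ (n + 1), show g (n + 1) = 0 by
        simp [g, qBinom_eq_zero_of_lt q n.lt_succ_self], add_zero]
    have hprod : ∏ i ∈ range (n + 1), (x + y * q ^ i) =
        (x + y) * ∏ i ∈ range n, (x + y * q * q ^ i) := by
      rw [prod_range_succ', mul_comm]
      simp [pow_succ', mul_assoc]
    have hterm : ∀ j ∈ range (n + 1),
        (x + y) * (q ^ j.choose 2 * qBinom q n j * (y * q) ^ j * x ^ (n - j)) = g j + h j := by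
      intro j hj
      have : x ^ (n + 1 - j) = x * x ^ (n - j) := by
        rw [← pow_succ']; congr 1; have := mem_range.mp hj; omega
      simp only [g, h, this]
      ring
    rw [hprod, ih, mul_sum, sum_congr rfl hterm, sum_add_distrib, hg, sum_range_succ' _ (n + 1)]
    simp only [g, h, qBinom_succ_succ, choose_two_succ, Nat.add_sub_add_right]
    rw [add_right_comm, ← sum_add_distrib]
    congr 1
    · exact sum_congr rfl fun j _ => by ring
    · simp

end QBinomial

section AtkinU

variable {R S : Type*} [CommRing R] [CommRing S]

/-- Atkin's operator `U_p`. -/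
noncomputable def atkinU (p : ℕ) (f : R⟦X⟧) : R⟦X⟧ := mk fun n => coeff (p * n) f

@[simp] lemma coeff_atkinU (p n : ℕ) (f : R⟦X⟧) : coeff n (atkinU p f) = coeff (p * n) f :=
  coeff_mk _ _

lemma atkinU_atkinU (p q : ℕ) (f : R⟦X⟧) : atkinU p (atkinU q f) = atkinU (q * p) f := by
  ext n; simp [mul_assoc]

lemma map_atkinU (φ : R →+* S) (p : ℕ) (f : R⟦X⟧) : map φ (atkinU p f) = atkinU p (map φ f) := by
  ext n; simp

lemma atkinU_mul_of_dvd {p : ℕ} (hp : p ≠ 0) {f g : R⟦X⟧}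
    (h : ∀ a b, p ∣ a + b → coeff a f * coeff b g ≠ 0 → p ∣ a) :
    atkinU p (f * g) = atkinU p f * atkinU p g := by
  ext n
  simp only [coeff_atkinU, coeff_mul]
  symm
  refine sum_of_injOn (fun x => (p * x.1, p * x.2)) ?_ ?_ ?_ (fun _ _ => rfl)
  · intro x _ y _ hxy
    simp only [Prod.mk.injEq, mul_right_inj' hp] at hxy
    exact Prod.ext hxy.1 hxy.2
  · intro x hx
    rw [mem_coe, HasAntidiagonal.mem_antidiagonal] at hx ⊢
    rw [← mul_add, hx]
  · intro x hx hxi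
    by_contra hne
    rw [HasAntidiagonal.mem_antidiagonal] at hx
    obtain ⟨a, ha⟩ := h x.1 x.2 (hx ▸ dvd_mul_right p n) hne
    obtain ⟨b, hb⟩ : p ∣ x.2 := (Nat.dvd_add_right ⟨a, ha⟩).mp (hx ▸ dvd_mul_right p n)
    refine hxi ⟨(a, b), ?_, Prod.ext ha.symm hb.symm⟩
    rw [mem_coe, HasAntidiagonal.mem_antidiagonal]
    apply Nat.eq_of_mul_eq_mul_left (Nat.pos_of_ne_zero hp)
    rw [mul_add, ← ha, ← hb, hx]

lemma atkinU_expand {p : ℕ} (hp : p ≠ 0) (f : R⟦X⟧) : atkinU p (expand p hp f) = f := by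
  ext n; simp

lemma atkinU_mul_expand {p : ℕ} (hp : p ≠ 0) (f g : R⟦X⟧) :
    atkinU p (f * expand p hp g) = atkinU p f * g := by
  rw [atkinU_mul_of_dvd hp, atkinU_expand]
  intro a b hab hne
  have hb : p ∣ b := by
    by_contra hb
    exact hne (by rw [coeff_expand_of_not_dvd p hp g hb, mul_zero])
  exact (Nat.dvd_add_left hb).mp hab

end AtkinU

lemma pow_char_eq_expand {p : ℕ} [Fact p.Prime] (f : (ZMod p)⟦X⟧) :
    f ^ p = expand p (Fact.out : p.Prime).ne_zero f := by
  rw [← MvPowerSeries.map_frobenius_expand p (Fact.out : p.Prime).ne_zero, ZMod.frobenius_zmod,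
    MvPowerSeries.map_id]
  rfl

lemma prod_neg_X_pow_two_mul_add_two (N : ℕ) :
    ∏ i ∈ range N, (-X ^ (2 * i + 2) : ℤ⟦X⟧) = (-1) ^ N * X ^ (N * (N + 1)) := by
  induction N with
  | zero => simp
  | succ N ih => rw [prod_range_succ, ih]; ring

lemma prod_X_pow_add_neg_X_sq_mul_pow (N : ℕ) :
    ∏ i ∈ range (2 * N), (X ^ (2 * N + 1) + -X ^ 2 * (X ^ 2) ^ i : ℤ⟦X⟧) =
      (-1) ^ N * X ^ (N * (N + 1) + N * (2 * N + 1)) *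
        (∏ i ∈ range N, (1 - X ^ (2 * i + 1))) ^ 2 := by
  have hlow : ∏ i ∈ range N, (X ^ (2 * N + 1) + -X ^ 2 * (X ^ 2) ^ i : ℤ⟦X⟧) =
      (-1) ^ N * X ^ (N * (N + 1)) * ∏ i ∈ range N, (1 - X ^ (2 * i + 1)) := by
    rw [← prod_neg_X_pow_two_mul_add_two,
      ← prod_range_reflect (fun i => (1 : ℤ⟦X⟧) - X ^ (2 * i + 1)), ← prod_mul_distrib]
    refine prod_congr rfl fun i hi => ?_
    have : 2 * N + 1 = (2 * i + 2) + (2 * (N - 1 - i) + 1) := by have := mem_range.mp hi; omega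
    rw [this, ← pow_mul]
    ring
  have hhigh : ∏ i ∈ range N, (X ^ (2 * N + 1) + -X ^ 2 * (X ^ 2) ^ (N + i) : ℤ⟦X⟧) =
      X ^ (N * (2 * N + 1)) * ∏ i ∈ range N, (1 - X ^ (2 * i + 1)) := by
    rw [mul_comm N, pow_mul, ← card_range N, ← prod_const, card_range, ← prod_mul_distrib]
    refine prod_congr rfl fun i _ => ?_
    rw [← pow_mul]
    ring
  rw [two_mul N, prod_range_add, ← two_mul, hlow, hhigh]
  ring

/-- A finite form of the Jacobi triple product at `z = -1`, with `k = j - N`. It is the q-binomial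
theorem for base `X²`, `x = X^{2N+1}` and `y = -X²`, divided by `X^{3N² + 2N}`. -/
theorem sq_prod_one_sub_X_pow_odd_eq_sum_qBinom (N : ℕ) :
    (∏ i ∈ range N, (1 - X ^ (2 * i + 1)) : ℤ⟦X⟧) ^ 2 =
      ∑ j ∈ range (2 * N + 1), (-1) ^ ((j : ℤ) - N).natAbs * X ^ (((j : ℤ) - N).natAbs ^ 2) *
        qBinom (X ^ 2) (2 * N) j := by
  have key := prod_add_mul_pow_eq_sum_qBinom (X ^ 2 : ℤ⟦X⟧) (X ^ (2 * N + 1)) (-X ^ 2) (2 * N)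
  rw [prod_X_pow_add_neg_X_sq_mul_pow] at key
  have hterm : ∀ j ∈ range (2 * N + 1),
      (-1) ^ N * ((X ^ 2) ^ j.choose 2 * qBinom (X ^ 2) (2 * N) j * (-X ^ 2) ^ j *
        (X ^ (2 * N + 1)) ^ (2 * N - j) : ℤ⟦X⟧) =
      X ^ (N * (N + 1) + N * (2 * N + 1)) * ((-1) ^ ((j : ℤ) - N).natAbs *
        X ^ (((j : ℤ) - N).natAbs ^ 2) * qBinom (X ^ 2) (2 * N) j) := by
    intro j hj
    have hj : j ≤ 2 * N := Nat.lt_succ_iff.mp (mem_range.mp hj)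
    have hexp : 2 * j.choose 2 + 2 * j + (2 * N + 1) * (2 * N - j) =
        N * (N + 1) + N * (2 * N + 1) + ((j : ℤ) - N).natAbs ^ 2 := by
      have h := two_mul_choose_two_add_self j
      zify [hj] at h ⊢
      rw [sq_abs]
      linear_combination h
    obtain ⟨m, hm⟩ : ∃ m, N + j = ((j : ℤ) - N).natAbs + 2 * m := ⟨min j N, by omega⟩
    calc (-1) ^ N * ((X ^ 2) ^ j.choose 2 * qBinom (X ^ 2) (2 * N) j * (-X ^ 2) ^ j *
          (X ^ (2 * N + 1)) ^ (2 * N - j) : ℤ⟦X⟧)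
        = (-1) ^ (N + j) * X ^ (2 * j.choose 2 + 2 * j + (2 * N + 1) * (2 * N - j)) *
            qBinom (X ^ 2) (2 * N) j := by
          rw [neg_pow (X ^ 2 : ℤ⟦X⟧), ← pow_mul, ← pow_mul, ← pow_mul]; ring
      _ = _ := by rw [hm, hexp, pow_add, pow_mul, neg_one_sq, one_pow, pow_add]; ring
  apply X_pow_mul_cancel (k := N * (N + 1) + N * (2 * N + 1))
  rw [mul_sum, ← sum_congr rfl hterm, ← mul_sum, ← key, ← mul_assoc, ← mul_assoc, ← pow_add,
    ← two_mul, pow_mul, neg_one_sq, one_pow, one_mul]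

lemma isUnit_qPochhammer {R : Type*} [CommRing R] {q : R⟦X⟧} (hq : constantCoeff q = 0) (n : ℕ) :
    IsUnit (qPochhammer q n) := by
  rw [isUnit_iff_constantCoeff, qPochhammer, map_prod]
  simp [hq]

noncomputable def thetaProd (N : ℕ) : ℤ⟦X⟧ :=
  ∏ m ∈ range N, (1 - X ^ (2 * m + 1)) ^ 2 * (1 - X ^ (2 * m + 2))

/-- `∑_{|k| ≤ N} (-1)^k X^{k²}`, indexed by `j = k + N`. -/
noncomputable def thetaPartial (N : ℕ) : ℤ⟦X⟧ :=
  ∑ j ∈ range (2 * N + 1), C ((-1) ^ ((j : ℤ) - N).natAbs) * X ^ (((j : ℤ) - N).natAbs ^ 2)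

theorem X_pow_dvd_thetaProd_sub_thetaPartial (N : ℕ) :
    X ^ (2 * N + 1) ∣ thetaProd N - thetaPartial N := by
  have hprod : thetaProd N =
      (∏ i ∈ range N, (1 - X ^ (2 * i + 1))) ^ 2 * qPochhammer (X ^ 2) N := by
    rw [thetaProd, qPochhammer, prod_mul_distrib, prod_pow]
    simp_rw [← pow_mul, mul_add]
  rw [hprod, sq_prod_one_sub_X_pow_odd_eq_sum_qBinom, sum_mul, thetaPartial, ← sum_sub_distrib]
  refine dvd_sum fun j hj => ?_
  have hj : j ≤ 2 * N := Nat.lt_succ_iff.mp (mem_range.mp hj)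
  set d := ((j : ℤ) - N).natAbs
  have hmin : min j (2 * N - j) = N - d := by omega
  have hnear := pow_dvd_qPochhammer_mul_qBinom_sub_one (X ^ 2 : ℤ⟦X⟧) (a := j) (b := 2 * N - j)
    (c := N) (by omega) ((isUnit_qPochhammer (by simp) _).mul (isUnit_qPochhammer (by simp) _))
  rw [Nat.add_sub_cancel' hj, hmin, ← pow_mul] at hnear
  have hexp : 2 * N + 1 ≤ d ^ 2 + 2 * (N - d + 1) := by
    have := two_mul_le_add_sq d 1
    have : d ≤ N := by omega
    omega
  have e : (-1) ^ d * X ^ (d ^ 2) * qBinom (X ^ 2) (2 * N) j * qPochhammer (X ^ 2) N -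
      C ((-1) ^ d) * X ^ (d ^ 2) = (-1 : ℤ⟦X⟧) ^ d *
      (X ^ (d ^ 2) * (qPochhammer (X ^ 2) N * qBinom (X ^ 2) (2 * N) j - 1)) := by
    simp only [map_pow, map_neg, map_one]; ring
  rw [e]
  refine Dvd.dvd.mul_left ?_ _
  calc (X : ℤ⟦X⟧) ^ (2 * N + 1) ∣ X ^ (d ^ 2 + 2 * (N - d + 1)) := pow_dvd_pow X hexp
    _ ∣ _ := by rw [pow_add]; exact mul_dvd_mul_left _ hnear

/-- The series `φ(-q) = ∑_{k ∈ ℤ} (-1)^k q^{k²}`. -/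
noncomputable def theta : ℤ⟦X⟧ :=
  mk fun n => ∑ k ∈ (Icc (-(n : ℤ)) n).filter (fun k => k.natAbs ^ 2 = n), (-1) ^ k.natAbs

lemma coeff_theta (n : ℕ) :
    coeff n theta = ∑ k ∈ (Icc (-(n : ℤ)) n).filter (fun k => k.natAbs ^ 2 = n), (-1) ^ k.natAbs :=
  coeff_mk _ _

lemma coeff_thetaPartial {n N : ℕ} (h : n ≤ 2 * N) : coeff n (thetaPartial N) = coeff n theta := by
  rw [thetaPartial, map_sum, coeff_theta]
  simp_rw [coeff_C_mul_X_pow, eq_comm (a := n), ← sum_filter]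
  refine sum_nbij' (fun j => (j : ℤ) - N) (fun k => (k + N).toNat) ?_ ?_ ?_ ?_ (fun _ _ => rfl)
  · intro j hj
    simp only [mem_filter, mem_range, mem_Icc] at hj ⊢
    have := Nat.le_self_pow two_ne_zero ((j : ℤ) - N).natAbs
    omega
  · intro k hk
    simp only [mem_filter, mem_range, mem_Icc] at hk ⊢
    have : k.natAbs ≤ N := by nlinarith
    refine ⟨by omega, ?_⟩
    rw [← hk.2]; congr 2; omega
  · intro j _; simp
  · intro k hk
    simp only [mem_filter, mem_Icc] at hk
    have : k.natAbs ≤ N := by nlinarith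
    omega

theorem X_pow_dvd_theta_sub_thetaProd (N : ℕ) : X ^ (2 * N + 1) ∣ theta - thetaProd N := by
  have h : X ^ (2 * N + 1) ∣ theta - thetaPartial N :=
    X_pow_dvd_iff.mpr fun n hn => by rw [map_sub, coeff_thetaPartial (by omega), sub_self]
  rw [← sub_sub_sub_cancel_right _ _ (thetaPartial N)]
  exact dvd_sub h (X_pow_dvd_thetaProd_sub_thetaPartial N)

lemma three_dvd_of_three_dvd_natAbs_sq {k : ℤ} (h : 3 ∣ k.natAbs ^ 2) : 3 ∣ k :=
  Int.natAbs_dvd_natAbs.mp (Nat.prime_three.dvd_of_dvd_pow h)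

lemma coeff_theta_nine_mul (n : ℕ) : coeff (9 * n) theta = coeff n theta := by
  rw [coeff_theta, coeff_theta]
  symm
  refine sum_nbij' (fun k => 3 * k) (fun k => k / 3) ?_ ?_ ?_ ?_ ?_
  · intro k hk
    simp only [mem_filter, mem_Icc] at hk ⊢
    rw [Int.natAbs_mul]
    push_cast
    refine ⟨by omega, by rw [← hk.2]; ring⟩
  · intro k hk
    simp only [mem_filter, mem_Icc] at hk ⊢
    obtain ⟨l, rfl⟩ := three_dvd_of_three_dvd_natAbs_sq (k := k) ⟨3 * n, by rw [hk.2]; ring⟩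
    rw [Int.natAbs_mul] at hk
    have hl : l.natAbs ^ 2 = n := by push_cast at hk; linarith
    have := Nat.le_self_pow two_ne_zero l.natAbs
    rw [Int.mul_ediv_cancel_left _ three_ne_zero]
    exact ⟨by omega, hl⟩
  · intro k _; simp
  · intro k hk
    rw [mem_filter] at hk
    obtain ⟨l, rfl⟩ := three_dvd_of_three_dvd_natAbs_sq (k := k) ⟨3 * n, by rw [hk.2]; ring⟩
    rw [Int.mul_ediv_cancel_left _ three_ne_zero]
  · intro k _
    simp [Int.natAbs_mul, pow_mul]

lemma coeff_theta_three_mul_of_not_dvd {n : ℕ} (hn : ¬ 3 ∣ n) : coeff (3 * n) theta = 0 := by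
  rw [coeff_theta]
  refine sum_eq_zero fun k hk => absurd ?_ hn
  rw [mem_filter] at hk
  obtain ⟨l, rfl⟩ := three_dvd_of_three_dvd_natAbs_sq (k := k) ⟨n, hk.2⟩
  exact ⟨l.natAbs ^ 2, by rw [Int.natAbs_mul] at hk; push_cast at hk; linarith⟩

lemma atkinU_three_theta : atkinU 3 theta = expand 3 three_ne_zero theta := by
  ext n
  rw [coeff_atkinU, coeff_expand]
  split_ifs with h
  · obtain ⟨m, rfl⟩ := h
    rw [← mul_assoc, Nat.mul_div_cancel_left _ three_pos]
    exact coeff_theta_nine_mul m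
  · exact coeff_theta_three_mul_of_not_dvd h

lemma exists_sq_of_coeff_theta_ne_zero {n : ℕ} (h : coeff n theta ≠ 0) : ∃ s, n = s ^ 2 := by
  rw [coeff_theta] at h
  obtain ⟨k, hk, -⟩ := exists_ne_zero_of_sum_ne_zero h
  exact ⟨k.natAbs, (mem_filter.mp hk).2.symm⟩

lemma three_dvd_of_three_dvd_sq_add_sq {s t : ℕ} (h : 3 ∣ s ^ 2 + t ^ 2) : 3 ∣ s := by
  have key : ∀ u v : ZMod 3, u ^ 2 + v ^ 2 = 0 → u = 0 := by decide
  rw [← ZMod.natCast_eq_zero_iff] at h ⊢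
  push_cast at h
  exact key _ _ h

lemma atkinU_nine_theta_sq : atkinU 9 (theta ^ 2) = theta ^ 2 := by
  have h9 : atkinU 9 theta = theta := by
    rw [show 9 = 3 * 3 from rfl, ← atkinU_atkinU, atkinU_three_theta, atkinU_expand]
  rw [sq, atkinU_mul_of_dvd (by norm_num), h9]
  intro a b hab hne
  obtain ⟨s, rfl⟩ := exists_sq_of_coeff_theta_ne_zero (left_ne_zero_of_mul hne)
  obtain ⟨t, rfl⟩ := exists_sq_of_coeff_theta_ne_zero (right_ne_zero_of_mul hne)
  obtain ⟨c, rfl⟩ := three_dvd_of_three_dvd_sq_add_sq (dvd_trans ⟨3, rfl⟩ hab)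
  exact ⟨c ^ 2, by ring⟩

lemma constantCoeff_theta : constantCoeff theta = 1 := by
  rw [← coeff_zero_eq_constantCoeff_apply, coeff_theta]
  decide

lemma one_sub_X_pow_mul_invOfUnit {R : Type*} [CommRing R] {d : ℕ} (hd : d ≠ 0) :
    (1 - X ^ d : R⟦X⟧) * invOfUnit (1 - X ^ d) 1 = 1 :=
  mul_invOfUnit _ _ (by simp [zero_pow hd])

lemma X_pow_dvd_invOfUnit_one_sub_X_pow_sub_one {R : Type*} [CommRing R] {d : ℕ} (hd : d ≠ 0) :
    (X : R⟦X⟧) ^ d ∣ invOfUnit (1 - X ^ d) 1 - 1 :=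
  ⟨invOfUnit (1 - X ^ d) 1, by linear_combination one_sub_X_pow_mul_invOfUnit (R := R) hd⟩

noncomputable def colorFactor (r s m : ℕ) : ℤ⟦X⟧ :=
  invOfUnit (1 - X ^ (2 * m + 1)) 1 ^ s * invOfUnit (1 - X ^ (2 * m + 2)) 1 ^ r

lemma colorFactor_mul (r s m : ℕ) :
    colorFactor r s m * ((1 - X ^ (2 * m + 1)) ^ s * (1 - X ^ (2 * m + 2)) ^ r) = 1 := by
  calc colorFactor r s m * ((1 - X ^ (2 * m + 1)) ^ s * (1 - X ^ (2 * m + 2)) ^ r)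
      = ((1 - X ^ (2 * m + 1)) * invOfUnit (1 - X ^ (2 * m + 1)) 1) ^ s *
          ((1 - X ^ (2 * m + 2)) * invOfUnit (1 - X ^ (2 * m + 2)) 1) ^ r := by
        rw [colorFactor, mul_pow, mul_pow]; ring
    _ = 1 := by
        rw [one_sub_X_pow_mul_invOfUnit (by omega), one_sub_X_pow_mul_invOfUnit (by omega),
          one_pow, one_pow, one_mul]

lemma X_pow_dvd_colorFactor_sub_one (r s m : ℕ) : X ^ (m + 1) ∣ colorFactor r s m - 1 := by
  have h1 := (pow_dvd_pow X (by omega : m + 1 ≤ 2 * m + 1)).trans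
    (X_pow_dvd_invOfUnit_one_sub_X_pow_sub_one (R := ℤ) (by omega))
  have h2 := (pow_dvd_pow X (by omega : m + 1 ≤ 2 * m + 2)).trans
    (X_pow_dvd_invOfUnit_one_sub_X_pow_sub_one (R := ℤ) (by omega))
  simp_rw [← Ideal.mem_span_singleton, ← SModEq.sub_mem] at h1 h2 ⊢
  simpa [colorFactor] using (h1.pow s).mul (h2.pow r)

noncomputable def colorSeries (r s : ℕ) : ℤ⟦X⟧ := mk (colorPart r s)

lemma X_pow_dvd_colorSeries_sub_prod_colorFactor (r s N : ℕ) :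
    X ^ N ∣ colorSeries r s - ∏ m ∈ range N, colorFactor r s m := by
  refine X_pow_dvd_iff.mpr fun n hn => ?_
  obtain ⟨c, rfl⟩ := Nat.exists_eq_add_of_lt hn
  have h := X_pow_dvd_iff.mp
    (pow_succ_dvd_prod_range_add_sub (X_pow_dvd_colorFactor_sub_one r s) (n + 1) c) n (by omega)
  rw [map_sub, sub_eq_zero] at h
  rw [map_sub, sub_eq_zero, show n + c + 1 = n + 1 + c by ring, h, colorSeries, coeff_mk]
  rfl

theorem X_pow_dvd_colorSeries_mul_sub_one (r s N : ℕ) :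
    X ^ N ∣ colorSeries r s *
      ∏ m ∈ range N, ((1 - X ^ (2 * m + 1)) ^ s * (1 - X ^ (2 * m + 2)) ^ r) - 1 := by
  convert (X_pow_dvd_colorSeries_sub_prod_colorFactor r s N).mul_right
    (∏ m ∈ range N, ((1 - X ^ (2 * m + 1)) ^ s * (1 - X ^ (2 * m + 2)) ^ r)) using 1
  rw [sub_mul, ← prod_mul_distrib, prod_eq_one fun m _ => colorFactor_mul r s m]

theorem colorSeries_mul_theta_sq : colorSeries 2 4 * theta ^ 2 = 1 := by
  rw [← sub_eq_zero]
  ext n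
  have hprod : thetaProd (n + 1) ^ 2 =
      ∏ m ∈ range (n + 1), ((1 - X ^ (2 * m + 1)) ^ 4 * (1 - X ^ (2 * m + 2)) ^ 2) := by
    rw [thetaProd, ← prod_pow]
    exact prod_congr rfl fun m _ => by ring
  have hθ : X ^ (n + 1) ∣ theta - thetaProd (n + 1) :=
    (pow_dvd_pow X (by omega)).trans (X_pow_dvd_theta_sub_thetaProd (n + 1))
  have hG := X_pow_dvd_colorSeries_mul_sub_one 2 4 (n + 1)
  rw [← hprod] at hG
  have : X ^ (n + 1) ∣ colorSeries 2 4 * theta ^ 2 - 1 := by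
    have e : colorSeries 2 4 * theta ^ 2 - 1 = colorSeries 2 4 * (theta + thetaProd (n + 1)) *
        (theta - thetaProd (n + 1)) + (colorSeries 2 4 * thetaProd (n + 1) ^ 2 - 1) := by ring
    rw [e]
    exact dvd_add (hθ.mul_left _) hG
  simpa using X_pow_dvd_iff.mp this n (by omega)

theorem atkinU_three_map_colorSeries :
    atkinU 3 (map (Int.castRingHom (ZMod 3)) (colorSeries 2 4)) =
      map (Int.castRingHom (ZMod 3)) theta ^ 2 := by
  set g := map (Int.castRingHom (ZMod 3)) (colorSeries 2 4)
  set t := map (Int.castRingHom (ZMod 3)) theta with ht_def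
  have hgt : g * t ^ 2 = 1 := by rw [← map_pow, ← map_mul, colorSeries_mul_theta_sq, map_one]
  have ht : IsUnit t := by
    rw [isUnit_iff_constantCoeff, ht_def, ← coeff_zero_eq_constantCoeff_apply, coeff_map,
      coeff_zero_eq_constantCoeff_apply, constantCoeff_theta, map_one]
    exact isUnit_one
  have hU : atkinU 3 t = t ^ 3 := by
    rw [pow_char_eq_expand, ← map_atkinU, atkinU_three_theta, map_expand]
  apply ht.mul_left_injective
  calc atkinU 3 g * t = atkinU 3 (g * expand 3 three_ne_zero t) := (atkinU_mul_expand _ g t).symm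
    _ = atkinU 3 t := by rw [← pow_char_eq_expand, show g * t ^ 3 = t by linear_combination t * hgt]
    _ = t ^ 2 * t := by rw [hU, pow_succ]

theorem stmt2 (n : ℕ) :
    colorPart 2 4 (27 * n) ≡ colorPart 2 4 (3 * n) [ZMOD 3] := by
  have hU := atkinU_three_map_colorSeries
  set φ := Int.castRingHom (ZMod 3)
  refine (ZMod.intCast_eq_intCast_iff _ _ 3).mp ?_
  calc (colorPart 2 4 (27 * n) : ZMod 3)
      = coeff (9 * n) (atkinU 3 (map φ (colorSeries 2 4))) := by
        simp [φ, colorSeries, ← mul_assoc]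
    _ = coeff (9 * n) (map φ (theta ^ 2)) := by rw [hU, ← map_pow]
    _ = coeff n (map φ (theta ^ 2)) := by
        rw [← coeff_atkinU, ← map_atkinU, atkinU_nine_theta_sq]
    _ = coeff n (atkinU 3 (map φ (colorSeries 2 4))) := by rw [hU, ← map_pow]
    _ = colorPart 2 4 (3 * n) := by simp [φ, colorSeries]
end

section
/- Let p ≥ 5 be a prime and let r be an integer with 1 ≤ r ≤ p-1 such that 4r+1 ≡ 0 (mod p). Then for all integers n ≥ 0 and all integers k ≥ j ≥ 0, a_{p(k-j)+(p-3), pk+p}(pn+r) ≡ 0 (mod p). -/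
open Finset

def triangular (d : ℤ) : ℕ := (d * (d + 1) / 2).toNat

theorem two_mul_triangular (d : ℤ) : 2 * (triangular d : ℤ) = d * (d + 1) := by
  have h0 : 0 ≤ d * (d + 1) := by rcases le_or_gt 0 d with h | h <;> nlinarith
  rw [triangular, Int.toNat_of_nonneg (Int.ediv_nonneg h0 (by norm_num))]
  exact Int.mul_ediv_cancel' (Int.even_mul_succ_self d).two_dvd

theorem triangular_add_one (d : ℤ) : (triangular (d + 1) : ℤ) = triangular d + d + 1 := by
  linarith [two_mul_triangular d, two_mul_triangular (d + 1)]

theorem triangular_neg_sub_one (d : ℤ) : triangular (-1 - d) = triangular d := by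
  have h : 2 * (triangular (-1 - d) : ℤ) = 2 * triangular d := by
    rw [two_mul_triangular, two_mul_triangular]; ring
  omega

theorem neg_sub_one_le_and_le_of_triangular_le {d : ℤ} {t : ℕ} (h : triangular d ≤ t) :
    -(t : ℤ) - 1 ≤ d ∧ d ≤ t := by
  have h2 := two_mul_triangular d
  have ht : (triangular d : ℤ) ≤ t := by exact_mod_cast h
  constructor <;> nlinarith

theorem triangular_natCast_eq_iff (d t : ℕ) : triangular d = t ↔ d * (d + 1) = 2 * t := by
  have h := two_mul_triangular d
  zify
  constructor <;> intro h' <;> linarith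

theorem triangular_natCast_succ_sub (k n : ℕ) :
    (triangular ((k + 1 : ℕ) - n) : ℤ) = triangular (k - n) + k - n + 1 := by
  rw [Nat.cast_succ, show (k : ℤ) + 1 - n = k - n + 1 by ring, triangular_add_one]; ring

theorem triangular_natCast_sub_succ (k n : ℕ) :
    (triangular (k - (n + 1 : ℕ)) : ℤ) = triangular (k - n) - k + n := by
  have h := triangular_add_one ((k : ℤ) - (n + 1))
  rw [show (k : ℤ) - (n + 1) + 1 = k - n by ring] at h
  push_cast; linarith

theorem sum_range_natCast_mul_ite_triangular {R : Type*} [CommRing R] {n t : ℕ}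
    (ht : t < n) :
    ∑ k ∈ range (2 * n + 1), (k : R) * (if triangular (k - n) = t then (-1) ^ (n + k) else 0) =
      ∑ d ∈ range n, if d * (d + 1) = 2 * t then (-1) ^ d * ((2 * d + 1 : ℕ) : R) else 0 := by
  have htop : triangular ((2 * n : ℕ) - n) ≠ t := by
    have h := two_mul_triangular n
    rw [show ((2 * n : ℕ) : ℤ) - n = n by push_cast; ring]
    intro h'; rw [h'] at h; nlinarith
  rw [sum_range_succ, if_neg htop, mul_zero, add_zero, two_mul, sum_range_add,
    ← sum_range_reflect, ← sum_add_distrib]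
  refine sum_congr rfl fun d hd => ?_
  have hd : d < n := mem_range.1 hd
  rw [show ((n - 1 - d : ℕ) : ℤ) - n = -1 - d by omega,
    show ((n + d : ℕ) : ℤ) - n = d by push_cast; ring, triangular_neg_sub_one]
  simp only [triangular_natCast_eq_iff]
  split_ifs
  · have s₁ : (-1 : R) ^ (n + (n - 1 - d)) = -(-1) ^ d := by
      rw [show n + (n - 1 - d) = 2 * (n - 1 - d) + d + 1 by omega, pow_succ, pow_add, pow_mul]
      simp
    have s₂ : (-1 : R) ^ (n + (n + d)) = (-1) ^ d := by
      rw [show n + (n + d) = 2 * n + d by ring, pow_add, pow_mul]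
      simp
    rw [s₁, s₂, Nat.cast_sub (by omega), Nat.cast_sub (by omega)]
    push_cast
    ring
  · simp

noncomputable section

namespace PowerSeries

variable {R : Type*} [CommRing R]

def qPoch (n : ℕ) : R⟦X⟧ := ∏ i ∈ range n, (1 - X ^ (i + 1))

theorem qPoch_succ (n : ℕ) : (qPoch (n + 1) : R⟦X⟧) = qPoch n * (1 - X ^ (n + 1)) :=
  prod_range_succ _ _

theorem qPoch_mul_prod_Ico {a b : ℕ} (h : a ≤ b) :
    (qPoch a * ∏ i ∈ Ico a b, (1 - X ^ (i + 1)) : R⟦X⟧) = qPoch b :=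
  prod_range_mul_prod_Ico _ h

theorem isUnit_qPoch (n : ℕ) : IsUnit (qPoch n : R⟦X⟧) := by
  simp [isUnit_iff_constantCoeff, qPoch]

def qBinom : ℕ → ℕ → R⟦X⟧
  | _, 0 => 1
  | 0, _ + 1 => 0
  | n + 1, k + 1 => qBinom n (k + 1) + X ^ (n - k) * qBinom n k

@[simp] theorem qBinom_zero_right (n : ℕ) : (qBinom n 0 : R⟦X⟧) = 1 := by
  cases n <;> rfl

theorem qBinom_succ_succ (n k : ℕ) :
    (qBinom (n + 1) (k + 1) : R⟦X⟧) = qBinom n (k + 1) + X ^ (n - k) * qBinom n k := rfl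

theorem qBinom_eq_zero_of_lt {n k : ℕ} (h : n < k) : (qBinom n k : R⟦X⟧) = 0 := by
  induction n generalizing k with
  | zero => obtain ⟨k, rfl⟩ := Nat.exists_eq_add_one_of_ne_zero (by omega : k ≠ 0); rfl
  | succ n ih =>
    obtain ⟨k, rfl⟩ := Nat.exists_eq_add_one_of_ne_zero (by omega : k ≠ 0)
    rw [qBinom_succ_succ, ih (by omega), ih (by omega), mul_zero, add_zero]

@[simp] theorem qBinom_self (n : ℕ) : (qBinom n n : R⟦X⟧) = 1 := by
  induction n with
  | zero => rfl
  | succ n ih => rw [qBinom_succ_succ, qBinom_eq_zero_of_lt (by omega), ih]; simp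

theorem qPoch_mul_qPoch_mul_qBinom {m k : ℕ} (h : k ≤ m) :
    (qPoch k * qPoch (m - k) * qBinom m k : R⟦X⟧) = qPoch m := by
  induction m generalizing k with
  | zero =>
    obtain rfl : k = 0 := by omega
    simp [qPoch]
  | succ m ih =>
    rcases k with _ | k
    · simp [qPoch]
    rcases (Nat.le_of_succ_le_succ h).eq_or_lt with rfl | hk
    · simp [qPoch]
    obtain ⟨a, rfl⟩ : ∃ a, m = k + 1 + a := ⟨m - (k + 1), by omega⟩
    have ih₁ := ih (k := k + 1) (by omega)
    have ih₂ := ih (k := k) (by omega)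
    rw [show k + 1 + a - (k + 1) = a by omega, qPoch_succ k] at ih₁
    rw [show k + 1 + a - k = a + 1 by omega, qPoch_succ a] at ih₂
    rw [qBinom_succ_succ, show k + 1 + a + 1 - (k + 1) = a + 1 by omega,
      show k + 1 + a - k = a + 1 by omega, qPoch_succ (k + 1 + a), qPoch_succ a, qPoch_succ k]
    linear_combination (1 - X ^ (a + 1)) * ih₁ + X ^ (a + 1) * (1 - X ^ (k + 1)) * ih₂

theorem one_sub_X_pow_mul_qBinom_succ (m k : ℕ) :
    (1 - X ^ (k + 1)) * (qBinom m (k + 1) : R⟦X⟧) = (1 - X ^ (m - k)) * qBinom m k := by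
  rcases lt_trichotomy m k with h | rfl | h
  · rw [qBinom_eq_zero_of_lt h, qBinom_eq_zero_of_lt (by omega), mul_zero, mul_zero]
  · rw [qBinom_eq_zero_of_lt (by omega), Nat.sub_self, pow_zero, sub_self]; ring
  obtain ⟨a, rfl⟩ : ∃ a, m = k + 1 + a := ⟨m - (k + 1), by omega⟩
  have h₁ := qPoch_mul_qPoch_mul_qBinom (R := R) (m := k + 1 + a) (k := k + 1) (by omega)
  have h₂ := qPoch_mul_qPoch_mul_qBinom (R := R) (m := k + 1 + a) (k := k) (by omega)
  rw [show k + 1 + a - (k + 1) = a by omega, qPoch_succ] at h₁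
  rw [show k + 1 + a - k = a + 1 by omega, qPoch_succ] at h₂
  rw [show k + 1 + a - k = a + 1 by omega]
  refine ((isUnit_qPoch k).mul (isUnit_qPoch a)).mul_left_cancel ?_
  linear_combination h₁ - h₂

theorem qBinom_succ_succ' (n k : ℕ) :
    (qBinom (n + 1) (k + 1) : R⟦X⟧) = X ^ (k + 1) * qBinom n (k + 1) + qBinom n k := by
  linear_combination qBinom_succ_succ (R := R) n k + one_sub_X_pow_mul_qBinom_succ (R := R) n k

theorem qBinom_two_mul_add_two (n k : ℕ) :
    (qBinom (2 * n + 2) (k + 2) : R⟦X⟧) = X ^ (k + 2) * qBinom (2 * n) (k + 2) +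
      (1 + X ^ (2 * n + 1)) * qBinom (2 * n) (k + 1) + X ^ (2 * n - k) * qBinom (2 * n) k := by
  rw [qBinom_succ_succ', qBinom_succ_succ, qBinom_succ_succ]
  rcases le_or_gt (k + 1) (2 * n) with h | h
  · have : X ^ (k + 2) * X ^ (2 * n - (k + 1)) = (X ^ (2 * n + 1) : R⟦X⟧) := by
      rw [← pow_add]; congr 1; omega
    linear_combination qBinom (2 * n) (k + 1) * this
  · rw [qBinom_eq_zero_of_lt h]
    ring

def jacobiTerm (n k : ℕ) : R⟦X⟧ := (-1) ^ (n + k) * qBinom (2 * n) k * X ^ triangular (k - n)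

theorem jacobiTerm_eq_zero {n k : ℕ} (h : 2 * n < k) : (jacobiTerm n k : R⟦X⟧) = 0 := by
  rw [jacobiTerm, qBinom_eq_zero_of_lt h, mul_zero, zero_mul]

theorem jacobiTerm_zero_zero : (jacobiTerm 0 0 : R⟦X⟧) = 1 := by
  simp [jacobiTerm, triangular]

theorem jacobiTerm_succ_zero (n : ℕ) :
    (jacobiTerm (n + 1) 0 : R⟦X⟧) = -X ^ n * jacobiTerm n 0 := by
  have e := triangular_natCast_sub_succ 0 n
  have he : triangular ((0 : ℕ) - (n + 1 : ℕ)) = n + triangular ((0 : ℕ) - n) := by omega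
  simp only [jacobiTerm, he, qBinom_zero_right, pow_add]
  ring

theorem jacobiTerm_succ_one (n : ℕ) : (jacobiTerm (n + 1) 1 : R⟦X⟧) =
    -X ^ n * jacobiTerm n 1 + (1 + X ^ (2 * n + 1)) * jacobiTerm n 0 := by
  have e₁ := triangular_natCast_sub_succ 1 n
  have e₂ := triangular_natCast_succ_sub 0 n
  rw [zero_add] at e₂
  have h₁ : triangular ((1 : ℕ) - (n + 1 : ℕ)) = triangular ((0 : ℕ) - n) := by omega
  have h₂ : (X : R⟦X⟧) ^ n * X ^ triangular ((1 : ℕ) - n) =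
      X * X ^ triangular ((0 : ℕ) - n) := by
    rw [← pow_add, show n + triangular ((1 : ℕ) - n) = 1 + triangular ((0 : ℕ) - n) by omega,
      pow_add, pow_one]
  have h₃ : (qBinom (2 * (n + 1)) 1 : R⟦X⟧) = X * qBinom (2 * n) 1 + 1 + X ^ (2 * n + 1) := by
    rw [show 2 * (n + 1) = 2 * n + 1 + 1 by ring, qBinom_succ_succ', qBinom_succ_succ]
    simp only [qBinom_zero_right, Nat.sub_zero]
    ring
  simp only [jacobiTerm, h₁, h₃, qBinom_zero_right]
  linear_combination (-1) ^ (n + 1) * qBinom (2 * n) 1 * h₂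

theorem jacobiTerm_succ_add_two (n k : ℕ) : (jacobiTerm (n + 1) (k + 2) : R⟦X⟧) =
    -X ^ n * jacobiTerm n (k + 2) + (1 + X ^ (2 * n + 1)) * jacobiTerm n (k + 1) -
      X ^ (n + 1) * jacobiTerm n k := by
  rcases le_or_gt k (2 * n) with hk | hk
  swap
  · simp only [jacobiTerm, qBinom_eq_zero_of_lt (R := R) (show 2 * (n + 1) < k + 2 by omega),
      qBinom_eq_zero_of_lt (R := R) (show 2 * n < k + 2 by omega),
      qBinom_eq_zero_of_lt (R := R) (show 2 * n < k + 1 by omega), qBinom_eq_zero_of_lt hk]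
    ring
  have e₁ := triangular_natCast_sub_succ (k + 2) n
  have e₂ := triangular_natCast_succ_sub (k + 1) n
  have e₃ := triangular_natCast_succ_sub k n
  rw [show k + 1 + 1 = k + 2 from rfl] at e₂
  have h₁ : triangular ((k + 1 : ℕ) - n) = triangular ((k + 2 : ℕ) - (n + 1 : ℕ)) := by
    omega
  have h₂ : (X : R⟦X⟧) ^ n * X ^ triangular ((k + 2 : ℕ) - n) =
      X ^ (k + 2) * X ^ triangular ((k + 2 : ℕ) - (n + 1 : ℕ)) := by
    rw [← pow_add, ← pow_add]; congr 1; omega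
  have h₃ : (X : R⟦X⟧) ^ (n + 1) * X ^ triangular (k - n) =
      X ^ (2 * n - k) * X ^ triangular ((k + 2 : ℕ) - (n + 1 : ℕ)) := by
    rw [← pow_add, ← pow_add]; congr 1; omega
  simp only [jacobiTerm, h₁, show 2 * (n + 1) = 2 * n + 2 by ring, qBinom_two_mul_add_two]
  linear_combination (-1) ^ (n + k) * (qBinom (2 * n) (k + 2) * h₂ + qBinom (2 * n) k * h₃)

theorem sum_range_mul_jacobiTerm_of_le (w : ℕ → R⟦X⟧) {n m : ℕ} (h : 2 * n + 1 ≤ m) :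
    ∑ k ∈ range m, w k * jacobiTerm n k =
      ∑ k ∈ range (2 * n + 1), w k * jacobiTerm n k := by
  refine (sum_subset (range_subset_range.2 h) fun k _ hk => ?_).symm
  rw [jacobiTerm_eq_zero (by simp at hk; omega), mul_zero]

theorem sum_range_mul_jacobiTerm_succ (w : ℕ → R⟦X⟧) (n : ℕ) :
    ∑ k ∈ range (2 * (n + 1) + 1), w k * jacobiTerm (n + 1) k =
      ∑ k ∈ range (2 * n + 1), (-X ^ n * w k + (1 + X ^ (2 * n + 1)) * w (k + 1) -
        X ^ (n + 1) * w (k + 2)) * jacobiTerm n k := by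
  have h₀ := sum_range_mul_jacobiTerm_of_le w (n := n) (m := 2 * n + 1 + 2) (by omega)
  have h₁ := sum_range_mul_jacobiTerm_of_le (fun k => w (k + 1)) (n := n) (m := 2 * n + 1 + 1)
    (by omega)
  rw [sum_range_succ', sum_range_succ'] at h₀
  rw [sum_range_succ'] at h₁
  simp only [zero_add, add_assoc, Nat.reduceAdd] at h₀ h₁
  simp only [add_mul, sub_mul, sum_add_distrib, sum_sub_distrib, mul_assoc, ← mul_sum, ← h₀,
    ← h₁]
  rw [show 2 * (n + 1) + 1 = 2 * n + 1 + 2 by ring, sum_range_succ', sum_range_succ']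
  simp only [zero_add, add_assoc, Nat.reduceAdd, jacobiTerm_succ_add_two, jacobiTerm_succ_one,
    jacobiTerm_succ_zero, mul_add, mul_sub, sum_add_distrib, sum_sub_distrib,
    mul_left_comm (w _), ← mul_sum]
  ring

theorem sum_jacobiTerm_succ (n : ℕ) :
    ∑ k ∈ range (2 * (n + 1) + 1), (jacobiTerm (n + 1) k : R⟦X⟧) = 0 := by
  induction n with
  | zero => simpa using sum_range_mul_jacobiTerm_succ (R := R) (fun _ => 1) 0
  | succ n ih =>
    simpa [← mul_sum, ih] using sum_range_mul_jacobiTerm_succ (R := R) (fun _ => 1) (n + 1)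

theorem sum_natCast_mul_jacobiTerm_succ (n : ℕ) :
    ∑ k ∈ range (2 * (n + 1) + 1), (k : R⟦X⟧) * jacobiTerm (n + 1) k =
      qPoch (n + 1) * qPoch n := by
  have hw : ∀ n k : ℕ,
      (-X ^ n * (k : R⟦X⟧) + (1 + X ^ (2 * n + 1)) * ((k + 1 : ℕ) : R⟦X⟧) -
        X ^ (n + 1) * ((k + 2 : ℕ) : R⟦X⟧)) * jacobiTerm n k =
      (1 - X ^ n) * (1 - X ^ (n + 1)) * ((k : R⟦X⟧) * jacobiTerm n k) +
        (1 + X ^ (2 * n + 1) - 2 * X ^ (n + 1)) * jacobiTerm n k := by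
    intro n k; push_cast; ring
  induction n with
  | zero =>
    rw [sum_range_mul_jacobiTerm_succ, sum_congr rfl fun k _ => hw 0 k]
    simp [jacobiTerm_zero_zero, qPoch]
    ring
  | succ n ih =>
    rw [sum_range_mul_jacobiTerm_succ, sum_congr rfl fun k _ => hw (n + 1) k, sum_add_distrib,
      ← mul_sum, ← mul_sum, ih, sum_jacobiTerm_succ, qPoch_succ (n + 1), qPoch_succ n]
    ring

theorem coeff_eq_of_mk_eq {t s : ℕ} {f g : R⟦X⟧}
    (h : Ideal.Quotient.mk (Ideal.span {X ^ (t + 1)}) f = Ideal.Quotient.mk _ g) (hs : s ≤ t) :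
    coeff s f = coeff s g := by
  rw [Ideal.Quotient.eq, Ideal.mem_span_singleton, X_pow_dvd_iff] at h
  exact sub_eq_zero.1 (by simpa using h s (by omega))

theorem mk_prod_Ico_one_sub_X_pow {m a : ℕ} (h : m ≤ a) (b : ℕ) :
    Ideal.Quotient.mk (Ideal.span {X ^ (m + 1)}) (∏ i ∈ Ico a b, (1 - X ^ (i + 1)) : R⟦X⟧) =
      1 := by
  rw [map_prod]
  refine prod_eq_one fun i hi => ?_
  rw [map_sub, map_one, Ideal.Quotient.eq_zero_iff_mem.2, sub_zero]
  exact Ideal.mem_span_singleton.2 (pow_dvd_pow X (by simp at hi; omega))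

theorem mk_qPoch_of_le {t M : ℕ} (h : t ≤ M) :
    Ideal.Quotient.mk (Ideal.span {X ^ (t + 1)}) (qPoch M : R⟦X⟧) =
      Ideal.Quotient.mk _ (qPoch t) := by
  rw [← qPoch_mul_prod_Ico h, map_mul, mk_prod_Ico_one_sub_X_pow le_rfl, mul_one]

theorem mk_qPoch_mul_qBinom {n k : ℕ} (h : k ≤ 2 * n) :
    Ideal.Quotient.mk (Ideal.span {X ^ (min k (2 * n - k) + 1)})
      (qPoch n * qBinom (2 * n) k : R⟦X⟧) = 1 := by
  have key : (qPoch k * qPoch (2 * n - k) * (qPoch n * qBinom (2 * n) k) : R⟦X⟧) =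
      qPoch k * qPoch (2 * n - k) * ((∏ i ∈ Ico (min k (2 * n - k)) n, (1 - X ^ (i + 1))) *
        ∏ i ∈ Ico (max k (2 * n - k)) (2 * n), (1 - X ^ (i + 1))) := by
    rw [mul_left_comm, qPoch_mul_qPoch_mul_qBinom h]
    rcases le_total k n with hk | hk
    · rw [min_eq_left (by omega), max_eq_right (by omega), ← qPoch_mul_prod_Ico hk,
        ← qPoch_mul_prod_Ico (show 2 * n - k ≤ 2 * n by omega)]
      ring
    · rw [min_eq_right (by omega), max_eq_left (by omega), ← qPoch_mul_prod_Ico h,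
        ← qPoch_mul_prod_Ico (show 2 * n - k ≤ n by omega)]
      ring
  rw [((isUnit_qPoch k).mul (isUnit_qPoch _)).mul_left_cancel key, map_mul,
    mk_prod_Ico_one_sub_X_pow le_rfl, mk_prod_Ico_one_sub_X_pow min_le_max, one_mul]

theorem coeff_qPoch_mul_jacobiTerm {n k t : ℕ} (hk : k ≤ 2 * n) (ht : 2 * t + 1 ≤ n) :
    coeff t (qPoch n * jacobiTerm n k : R⟦X⟧) =
      if triangular (k - n) = t then (-1) ^ (n + k) else 0 := by
  have h : (qPoch n * jacobiTerm n k : R⟦X⟧) =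
      C ((-1) ^ (n + k)) * (qPoch n * qBinom (2 * n) k) * X ^ triangular (k - n) := by
    simp only [jacobiTerm, map_pow, map_neg, map_one]; ring
  rw [h, coeff_mul_X_pow']
  by_cases hle : triangular (k - n) ≤ t
  · obtain ⟨h₁, h₂⟩ := neg_sub_one_le_and_le_of_triangular_le hle
    rw [if_pos hle, coeff_C_mul, coeff_eq_of_mk_eq ((mk_qPoch_mul_qBinom hk).trans (map_one _).symm)
      (show t - triangular (k - n) ≤ min k (2 * n - k) by omega), coeff_one]
    split_ifs <;> first | omega | simp
  · rw [if_neg hle, if_neg (by omega)]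

theorem coeff_qPoch_pow_three {t M : ℕ} (ht : t ≤ M) :
    coeff t (qPoch M ^ 3 : R⟦X⟧) = ∑ d ∈ range (t + 1),
      if d * (d + 1) = 2 * t then (-1) ^ d * ((2 * d + 1 : ℕ) : R) else 0 := by
  have hM : coeff t (qPoch M ^ 3 : R⟦X⟧) = coeff t (qPoch (2 * t + 1) *
      ∑ k ∈ range (2 * (2 * t + 1) + 1), (k : R⟦X⟧) * jacobiTerm (2 * t + 1) k) := by
    rw [sum_natCast_mul_jacobiTerm_succ]
    refine coeff_eq_of_mk_eq ?_ le_rfl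
    simp only [map_pow, map_mul, mk_qPoch_of_le ht, mk_qPoch_of_le (show t ≤ 2 * t + 1 by omega),
      mk_qPoch_of_le (show t ≤ 2 * t by omega)]
    ring
  have hk : ∀ k ∈ range (2 * (2 * t + 1) + 1),
      coeff t (qPoch (2 * t + 1) * ((k : R⟦X⟧) * jacobiTerm (2 * t + 1) k)) =
        (k : R) * if triangular (k - (2 * t + 1 : ℕ)) = t then (-1) ^ (2 * t + 1 + k) else 0 := by
    intro k hk
    rw [mul_left_comm, ← map_natCast (C (R := R)), coeff_C_mul,
      coeff_qPoch_mul_jacobiTerm (by simp at hk; omega) le_rfl]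
  rw [hM, mul_sum, map_sum, sum_congr rfl hk, sum_range_natCast_mul_ite_triangular (by omega)]
  refine (sum_subset (range_subset_range.2 (by omega)) fun d _ hd => if_neg ?_).symm
  simp only [mem_range, not_lt] at hd
  nlinarith

theorem coeff_qPoch_pow_three_eq_zero {p t M : ℕ} [CharP R p] (hp : p.Prime) (ht : t ≤ M)
    (h : p ∣ 8 * t + 1) : coeff t (qPoch M ^ 3 : R⟦X⟧) = 0 := by
  rw [coeff_qPoch_pow_three ht]
  refine sum_eq_zero fun d _ => ?_
  split_ifs with hd
  · have h2d : p ∣ 2 * d + 1 :=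
      hp.dvd_of_dvd_pow (n := 2) (by rwa [show (2 * d + 1) ^ 2 = 8 * t + 1 by nlinarith])
    rw [(CharP.cast_eq_zero_iff R p _).2 h2d, mul_zero]
  · rfl

theorem one_sub_X_pow_mul_invOfUnit {c : ℕ} (hc : c ≠ 0) :
    ((1 - X ^ c) * invOfUnit (1 - X ^ c) 1 : R⟦X⟧) = 1 :=
  mul_invOfUnit _ _ (by simp [zero_pow hc])

theorem map_invOfUnit_one_sub_X_pow {S : Type*} [CommRing S] (f : R →+* S) {c : ℕ}
    (hc : c ≠ 0) :
    map f (invOfUnit (1 - X ^ c) 1) = invOfUnit (1 - X ^ c) 1 :=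
  left_inv_eq_right_inv (a := 1 - X ^ c)
    (by simpa [mul_comm] using congrArg (map f) (one_sub_X_pow_mul_invOfUnit (R := R) hc))
    (one_sub_X_pow_mul_invOfUnit hc)

section CharP

variable {p : ℕ} [CharP R p]

theorem invOfUnit_one_sub_X_pow_pow_mul (hp : p.Prime) {c : ℕ} (hc : c ≠ 0) (s : ℕ) :
    (invOfUnit (1 - X ^ c) 1 : R⟦X⟧) ^ (p * s) =
      expand p hp.ne_zero (invOfUnit (1 - X ^ c) 1 ^ s) := by
  have := Fact.mk hp
  have : CharP R⟦X⟧ p := charP_of_injective_ringHom C_injective p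
  rw [pow_mul, map_pow]
  congr 1
  refine left_inv_eq_right_inv (a := 1 - X ^ (c * p)) ?_ ?_
  · have e : (1 - X ^ (c * p) : R⟦X⟧) = (1 - X ^ c) ^ p := by
      rw [sub_pow_char, one_pow, ← pow_mul]
    rw [e, ← mul_pow, mul_comm, one_sub_X_pow_mul_invOfUnit hc, one_pow]
  · have e : (1 - X ^ (c * p) : R⟦X⟧) = expand p hp.ne_zero (1 - X ^ c) := by
      rw [map_sub, map_one, map_pow, expand_X, ← pow_mul, mul_comm]
    rw [e, ← map_mul, one_sub_X_pow_mul_invOfUnit hc, map_one]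

theorem invOfUnit_one_sub_X_pow_pow_mul_add_sub_three (hp : p.Prime) (hp3 : 3 ≤ p) {c : ℕ}
    (hc : c ≠ 0) (s : ℕ) : (invOfUnit (1 - X ^ c) 1 : R⟦X⟧) ^ (p * s + (p - 3)) =
      expand p hp.ne_zero (invOfUnit (1 - X ^ c) 1 ^ (s + 1)) * (1 - X ^ c) ^ 3 := by
  rw [← invOfUnit_one_sub_X_pow_pow_mul hp hc, show p * (s + 1) = p * s + (p - 3) + 3 by
    rw [mul_add, mul_one]; omega, pow_add _ (p * s + (p - 3)) 3, mul_assoc, ← mul_pow,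
    mul_comm _ (1 - X ^ c), one_sub_X_pow_mul_invOfUnit hc, one_pow, mul_one]

theorem map_prod_invOfUnit_pow_eq_expand_mul_expand (hp : p.Prime) (hp3 : 3 ≤ p) (N k l : ℕ) :
    map (Int.castRingHom R) (∏ m ∈ range N, invOfUnit (1 - X ^ (2 * m + 1)) 1 ^ (p * k + p) *
        invOfUnit (1 - X ^ (2 * m + 2)) 1 ^ (p * l + (p - 3)) : ℤ⟦X⟧) =
      expand p hp.ne_zero (∏ m ∈ range N, invOfUnit (1 - X ^ (2 * m + 1)) 1 ^ (k + 1) *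
        invOfUnit (1 - X ^ (2 * m + 2)) 1 ^ (l + 1)) * expand 2 two_ne_zero (qPoch N ^ 3) := by
  rw [qPoch, ← prod_pow, map_prod, map_prod, map_prod, ← prod_mul_distrib]
  refine prod_congr rfl fun m _ => ?_
  rw [map_mul, map_pow, map_pow, map_invOfUnit_one_sub_X_pow _ (by omega),
    map_invOfUnit_one_sub_X_pow _ (by omega), show p * k + p = p * (k + 1) by ring,
    invOfUnit_one_sub_X_pow_pow_mul hp (by omega),
    invOfUnit_one_sub_X_pow_pow_mul_add_sub_three hp hp3 (by omega), map_mul]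
  simp only [map_pow, map_sub, map_one, expand_X, ← pow_mul]
  ring

end CharP

theorem coeff_expand_mul_eq_zero {p N : ℕ} (hp : p ≠ 0) (f g : R⟦X⟧)
    (h : ∀ u ≤ N, p ∣ u → coeff (N - u) g = 0) : coeff N (expand p hp f * g) = 0 := by
  rw [coeff_mul]
  refine sum_eq_zero fun ⟨u, v⟩ huv => ?_
  rw [HasAntidiagonal.mem_antidiagonal] at huv
  by_cases hu : p ∣ u
  · rw [show v = N - u by omega, h u (by omega) hu, mul_zero]
  · rw [coeff_expand_of_not_dvd p hp f hu, zero_mul]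

end PowerSeries

end

open PowerSeries in
theorem stmt8_general (p : ℕ) (hp : p.Prime) (hp5 : 5 ≤ p)
    (r : ℕ) (hdvd : p ∣ 4 * r + 1)
    (n j k : ℕ) :
    colorPart (p * (k - j) + (p - 3)) (p * k + p) (p * n + r) ≡ 0 [ZMOD p] := by
  rw [Int.modEq_zero_iff_dvd, ← ZMod.intCast_zmod_eq_zero_iff_dvd, colorPart,
    ← eq_intCast (Int.castRingHom (ZMod p)), ← coeff_map,
    map_prod_invOfUnit_pow_eq_expand_mul_expand hp (by omega)]
  refine coeff_expand_mul_eq_zero _ _ _ fun u hu hpu => ?_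
  rw [coeff_expand]
  split_ifs with h2
  · obtain ⟨w, hw⟩ := h2
    obtain ⟨v, rfl⟩ := hpu
    rw [hw, Nat.mul_div_cancel_left w two_pos]
    refine coeff_qPoch_pow_three_eq_zero hp (by omega) ?_
    have hw' : ((p * n + r - p * v : ℕ) : ZMod p) = 2 * w := by rw [hw]; push_cast; ring
    have hr := (ZMod.natCast_eq_zero_iff _ _).2 hdvd
    rw [← ZMod.natCast_eq_zero_iff]
    push_cast [Nat.cast_sub hu, ZMod.natCast_self] at hw' hr ⊢
    linear_combination (-4) * hw' + hr
  · rfl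

theorem stmt8 (p : ℕ) (hp : p.Prime) (hp5 : 5 ≤ p)
    (r : ℕ) (hr1 : 1 ≤ r) (hr2 : r ≤ p - 1) (hdvd : p ∣ 4 * r + 1)
    (n j k : ℕ) (hjk : j ≤ k) :
    colorPart (p * (k - j) + (p - 3)) (p * k + p) (p * n + r) ≡ 0 [ZMOD p] :=
  stmt8_general p hp hp5 r hdvd n j k
end

section
/- Let p ≥ 5 be a prime and let r be an integer with 1 ≤ r ≤ p-1 such that r is a quadratic non-residue modulo p. Then for all integers n ≥ 0 and all integers k ≥ j ≥ 0, a_{p(k-j)+(p-1), pk+(p-2)}(pn+r) ≡ 0 (mod p). -/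
/-!
Modulo `p`, `(1 - q^c)^{-(pk + p - 2)} = (1 - q^c)^2 ((1 - q^c)^{-(k+1)})^p` and
`(1 - q^c)^{-(pl + p - 1)} = (1 - q^c) ((1 - q^c)^{-(l+1)})^p`, so the generating function of
`a_{p(k-j)+p-1, pk+p-2}` is `∏ (1 - q^{2m-1})^2 (1 - q^{2m})` times a `p`-th power, and a `p`-th
power is a series in `q^p` in characteristic `p`. By Gauss's identity
`∏ (1 - q^{2m-1})^2 (1 - q^{2m}) = ∑_{j ∈ ℤ} (-1)^j q^{j^2}`, the coefficient of `q^{pn+r}` is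
therefore a combination of coefficients at squares `≡ r (mod p)`, and there are none.

Gauss's identity is used through its finite form, the Jacobi triple product at `z = -1`:
`∏_{m<M} (1 - q^{2m+1})^2 = ∑_{|j| ≤ M} (-1)^j q^{j^2} [2M, M+j]_{q^2}`. Multiplied by
`(q^2; q^2)_{2M}`, each Gaussian binomial becomes a product of two tails of `(q^2; q^2)_∞`, which
is `1` modulo a high power of `q`.
-/

open Finset

section GaussIdentity

open Polynomial

/-- The Gaussian binomial coefficient `[n choose i]` in the variable `q = X ^ 2`, extended by zero
to all integers `i`. -/
noncomputable def gaussBinom : ℕ → ℤ → ℤ[X]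
  | 0, i => if i = 0 then 1 else 0
  | n + 1, i => gaussBinom n (i - 1) + X ^ (2 * i).toNat * gaussBinom n i

theorem gaussBinom_zero (i : ℤ) : gaussBinom 0 i = if i = 0 then 1 else 0 := by
  rw [gaussBinom]

theorem gaussBinom_succ (n : ℕ) (i : ℤ) :
    gaussBinom (n + 1) i = gaussBinom n (i - 1) + X ^ (2 * i).toNat * gaussBinom n i := by
  rw [gaussBinom]

theorem gaussBinom_of_neg {i : ℤ} (hi : i < 0) : ∀ n, gaussBinom n i = 0
  | 0 => by rw [gaussBinom_zero, if_neg hi.ne]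
  | n + 1 => by
    rw [gaussBinom_succ, gaussBinom_of_neg hi, gaussBinom_of_neg (by omega), mul_zero, add_zero]

theorem gaussBinom_of_lt : ∀ {n : ℕ} {i : ℤ}, (n : ℤ) < i → gaussBinom n i = 0
  | 0, i, hi => by rw [gaussBinom_zero, if_neg (by omega)]
  | n + 1, i, hi => by
    rw [gaussBinom_succ, gaussBinom_of_lt (by omega), gaussBinom_of_lt (by omega), mul_zero,
      add_zero]

theorem gaussBinom_zero_right : ∀ n, gaussBinom n 0 = 1
  | 0 => by rw [gaussBinom_zero, if_pos rfl]
  | n + 1 => by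
    rw [gaussBinom_succ, gaussBinom_zero_right n, gaussBinom_of_neg (by omega), zero_add]; simp

theorem X_pow_mul_gaussBinom_congr {a b n : ℕ} {i : ℤ} (h : 0 ≤ i → i ≤ n → a = b) :
    X ^ a * gaussBinom n i = X ^ b * gaussBinom n i := by
  by_cases hi : 0 ≤ i ∧ i ≤ n
  · rw [h hi.1 hi.2]
  · rcases not_and_or.mp hi with hi | hi
    · rw [gaussBinom_of_neg (not_le.mp hi), mul_zero, mul_zero]
    · rw [gaussBinom_of_lt (not_le.mp hi), mul_zero, mul_zero]

theorem gaussBinom_succ' (n : ℕ) (i : ℤ) :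
    gaussBinom (n + 1) i = X ^ (2 * (n + 1 - i)).toNat * gaussBinom n (i - 1) + gaussBinom n i := by
  induction n generalizing i with
  | zero =>
    simp only [gaussBinom_succ, gaussBinom_zero]
    by_cases h0 : i = 0
    · subst h0; simp
    by_cases h1 : i = 1
    · subst h1; simp
    simp [h0, h1, sub_eq_zero]
  | succ n ih =>
    conv_rhs => rw [gaussBinom_succ n (i - 1), gaussBinom_succ n i]
    rw [gaussBinom_succ (n + 1), ih, ih]
    have key : X ^ (2 * i).toNat * X ^ (2 * (n + 1 - i)).toNat * gaussBinom n (i - 1)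
        = X ^ (2 * (n + 1 + 1 - i)).toNat * X ^ (2 * (i - 1)).toNat * gaussBinom n (i - 1) := by
      simp only [← pow_add]
      exact X_pow_mul_gaussBinom_congr fun _ _ => by omega
    push_cast
    rw [show (n : ℤ) + 1 - (i - 1) = n + 1 + 1 - i by ring]
    linear_combination key

theorem gaussBinom_add_two (n : ℕ) (i : ℤ) :
    gaussBinom (n + 2) i = X ^ (2 * (n + 2 - i)).toNat * gaussBinom n (i - 2)
      + (1 + X ^ (2 * (n + 1))) * gaussBinom n (i - 1) + X ^ (2 * i).toNat * gaussBinom n i := by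
  rw [gaussBinom_succ, gaussBinom_succ', gaussBinom_succ']
  have key : X ^ (2 * i).toNat * X ^ (2 * (n + 1 - i)).toNat * gaussBinom n (i - 1)
      = X ^ (2 * (n + 1)) * gaussBinom n (i - 1) := by
    rw [← pow_add]
    exact X_pow_mul_gaussBinom_congr fun _ _ => by omega
  rw [show i - 1 - 1 = i - 2 by ring, show (n : ℤ) + 1 - (i - 1) = n + 2 - i by ring]
  linear_combination key

/-- `(X^2; X^2)_b / (X^2; X^2)_a`. -/
noncomputable def evenProd (a b : ℕ) : ℤ[X] := ∏ m ∈ Ico a b, (1 - X ^ (2 * m + 2))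

theorem gaussBinom_mul_evenProd : ∀ {n i : ℕ}, i ≤ n →
    gaussBinom n i * evenProd 0 i = evenProd (n - i) n
  | n, 0, _ => by simp [gaussBinom_zero_right, evenProd]
  | 0, _ + 1, h => absurd h (by omega)
  | n + 1, i + 1, h => by
    have hB : gaussBinom (n + 1) (i + 1 : ℕ)
        = gaussBinom n i + X ^ (2 * i + 2) * gaussBinom n (i + 1 : ℕ) := by
      rw [gaussBinom_succ, show (2 * ((i + 1 : ℕ) : ℤ)).toNat = 2 * i + 2 by omega]
      push_cast
      ring_nf
    have hE : evenProd 0 (i + 1) = evenProd 0 i * (1 - X ^ (2 * i + 2)) :=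
      prod_Ico_succ_top (Nat.zero_le i) _
    have hlow : gaussBinom n i * evenProd 0 i = evenProd (n - i) n :=
      gaussBinom_mul_evenProd (by omega)
    have htop : evenProd (n - i) (n + 1) = evenProd (n - i) n * (1 - X ^ (2 * n + 2)) :=
      prod_Ico_succ_top (by omega) _
    rw [Nat.add_sub_add_right, htop, hB]
    rcases (Nat.le_of_succ_le_succ h).lt_or_eq with hlt | rfl
    · have hhigh : gaussBinom n (i + 1 : ℕ) * evenProd 0 (i + 1) = evenProd (n - (i + 1)) n :=
        gaussBinom_mul_evenProd hlt
      have hbot : evenProd (n - (i + 1)) n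
          = (1 - X ^ (2 * (n - (i + 1)) + 2)) * evenProd (n - i) n := by
        rw [evenProd, prod_eq_prod_Ico_succ_bot (by omega), show n - (i + 1) + 1 = n - i by omega]
        rfl
      have hpow : (X : ℤ[X]) ^ (2 * i + 2) * X ^ (2 * (n - (i + 1)) + 2) = X ^ (2 * n + 2) := by
        rw [← pow_add]; congr 1; omega
      linear_combination gaussBinom n i * hE + (1 - X ^ (2 * i + 2)) * hlow
        + X ^ (2 * i + 2) * hhigh + X ^ (2 * i + 2) * hbot - evenProd (n - i) n * hpow
    · rw [gaussBinom_of_lt (i := (i + 1 : ℕ)) (by omega)]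
      rw [Nat.sub_self] at hlow ⊢
      linear_combination gaussBinom i i * hE + (1 - X ^ (2 * i + 2)) * hlow

section Truncation

variable {R : Type*} [CommRing R]

noncomputable def truncMod (d : ℕ) : R[X] →+* R[X] ⧸ Ideal.span {(X : R[X]) ^ (d + 1)} :=
  Ideal.Quotient.mk _

theorem coeff_eq_of_truncMod_eq {d : ℕ} {f g : R[X]} (h : truncMod d f = truncMod d g) :
    f.coeff d = g.coeff d := by
  rw [truncMod, Ideal.Quotient.mk_eq_mk_iff_sub_mem, Ideal.mem_span_singleton,
    X_pow_dvd_iff] at h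
  simpa [sub_eq_zero] using h d (lt_add_one d)

theorem truncMod_one_sub_X_pow {d c : ℕ} (h : d < c) : truncMod d (1 - X ^ c : R[X]) = 1 := by
  rw [map_sub, map_one, sub_eq_self, truncMod, Ideal.Quotient.eq_zero_iff_mem,
    Ideal.mem_span_singleton]
  exact pow_dvd_pow X h

theorem truncMod_prod_range_eq {d K N M : ℕ} (f : ℕ → R[X])
    (hf : ∀ m, K ≤ m → truncMod d (f m) = 1) (hN : K ≤ N) (hM : K ≤ M) :
    truncMod d (∏ m ∈ range N, f m) = truncMod d (∏ m ∈ range M, f m) := by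
  have hK : ∀ N, K ≤ N → truncMod d (∏ m ∈ range N, f m) = truncMod d (∏ m ∈ range K, f m) :=
    fun N hN => by
      rw [← prod_range_mul_prod_Ico f hN, map_mul, map_prod _ _ (Ico K N),
        prod_eq_one fun m hm => hf m (mem_Ico.1 hm).1, mul_one]
  rw [hK N hN, hK M hM]

end Truncation

theorem truncMod_evenProd {d a : ℕ} (b : ℕ) (h : d < 2 * a + 2) :
    truncMod d (evenProd a b) = 1 := by
  rw [evenProd, map_prod]
  exact prod_eq_one fun m hm => truncMod_one_sub_X_pow (by have := (mem_Ico.1 hm).1; omega)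

theorem coeff_gaussBinom_mul_evenProd {n i d : ℕ} (hi : i ≤ n) (hd : d < 2 * i + 2)
    (hd' : d < 2 * (n - i) + 2) :
    (gaussBinom n i * evenProd 0 n).coeff d = if d = 0 then 1 else 0 := by
  have hsplit : evenProd 0 n = evenProd 0 i * evenProd i n :=
    (prod_Ico_consecutive _ (Nat.zero_le i) hi).symm
  rw [← coeff_one, hsplit, ← mul_assoc, gaussBinom_mul_evenProd hi]
  apply coeff_eq_of_truncMod_eq
  rw [map_mul, truncMod_evenProd _ hd', truncMod_evenProd _ hd, mul_one, map_one]

noncomputable def thetaTerm (M : ℕ) (j : ℤ) : ℤ[X] :=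
  C (j.negOnePow : ℤ) * X ^ (j.natAbs ^ 2) * gaussBinom (2 * M) (M + j)

theorem thetaTerm_eq_zero {M : ℕ} {j : ℤ} (h : j < -M ∨ M < j) : thetaTerm M j = 0 := by
  rw [thetaTerm]
  rcases h with h | h
  · rw [gaussBinom_of_neg (by omega), mul_zero]
  · rw [gaussBinom_of_lt (by push_cast; omega), mul_zero]

theorem thetaTerm_succ (M : ℕ) (j : ℤ) :
    thetaTerm (M + 1) j = (1 + X ^ (2 * (2 * M + 1))) * thetaTerm M j
      - X ^ (2 * M + 1) * (thetaTerm M (j - 1) + thetaTerm M (j + 1)) := by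
  have hB := gaussBinom_add_two (2 * M) (M + 1 + j)
  have hlow : X ^ (j.natAbs ^ 2) * X ^ (2 * ((2 * M : ℕ) + 2 - (M + 1 + j))).toNat
      * gaussBinom (2 * M) (M + (j - 1))
      = X ^ (2 * M + 1) * X ^ ((j - 1).natAbs ^ 2) * gaussBinom (2 * M) (M + (j - 1)) := by
    simp only [← pow_add]
    refine X_pow_mul_gaussBinom_congr fun _ h => ?_
    push_cast at h
    zify
    rw [Int.toNat_of_nonneg (by omega), sq_abs, sq_abs]
    ring
  have hhigh : X ^ (j.natAbs ^ 2) * X ^ (2 * (M + 1 + j)).toNat * gaussBinom (2 * M) (M + 1 + j)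
      = X ^ (2 * M + 1) * X ^ ((j + 1).natAbs ^ 2) * gaussBinom (2 * M) (M + 1 + j) := by
    simp only [← pow_add]
    refine X_pow_mul_gaussBinom_congr fun h _ => ?_
    zify
    rw [Int.toNat_of_nonneg (by omega), sq_abs, sq_abs]
    ring
  have hs₁ : ((j - 1).negOnePow : ℤ) = -j.negOnePow := by
    rw [Int.negOnePow_sub, Int.negOnePow_one]; push_cast; ring
  have hs₂ : ((j + 1).negOnePow : ℤ) = -j.negOnePow := by
    rw [Int.negOnePow_succ]; push_cast; ring
  rw [show (M : ℤ) + 1 + j - 2 = M + (j - 1) by ring,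
    show (M : ℤ) + 1 + j - 1 = M + j by ring] at hB
  simp only [thetaTerm, hs₁, hs₂, map_neg, show 2 * (M + 1) = 2 * M + 2 by ring,
    show (M : ℤ) + (j + 1) = M + 1 + j by ring]
  push_cast
  linear_combination C (j.negOnePow : ℤ) * (X ^ (j.natAbs ^ 2) * hB + hlow + hhigh)

theorem sum_Icc_comp_add_eq {M : Type*} [AddCommMonoid M] {f : ℤ → M} {a b a' b' c : ℤ}
    (hf : ∀ j, j < a ∨ b < j → f j = 0) (ha : a' + c ≤ a) (hb : b ≤ b' + c) :
    ∑ j ∈ Icc a' b', f (j + c) = ∑ j ∈ Icc a b, f j := by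
  rw [show ∑ j ∈ Icc a' b', f (j + c) = ∑ j ∈ (Icc a' b').map (addRightEmbedding c), f j from
    (sum_map _ (addRightEmbedding c) f).symm, map_add_right_Icc]
  refine (sum_subset (Icc_subset_Icc ha hb) fun j _ hj => hf j ?_).symm
  rw [mem_Icc] at hj
  omega

/-- The finite Jacobi triple product at `z = -1`. -/
theorem prod_one_sub_X_odd_sq_eq_sum_thetaTerm (M : ℕ) :
    ∏ m ∈ range M, (1 - X ^ (2 * m + 1) : ℤ[X]) ^ 2 = ∑ j ∈ Icc (-M : ℤ) M, thetaTerm M j := by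
  induction M with
  | zero => simp [thetaTerm, gaussBinom_zero]
  | succ M ih =>
    set S := ∑ j ∈ Icc (-M : ℤ) M, thetaTerm M j
    have hshift : ∀ c : ℤ, |c| ≤ 1 →
        ∑ j ∈ Icc (-(M + 1 : ℕ) : ℤ) (M + 1 : ℕ), thetaTerm M (j + c) = S := fun c hc =>
      sum_Icc_comp_add_eq (fun _ h => thetaTerm_eq_zero h) (by push_cast; grind)
        (by push_cast; grind)
    have h₀ := hshift 0 (by simp)
    have h₁ := hshift (-1) (by simp)
    have h₂ := hshift 1 (by simp)
    simp only [add_zero, ← sub_eq_add_neg] at h₀ h₁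
    simp only [thetaTerm_succ, sum_sub_distrib, ← mul_sum, sum_add_distrib, h₀, h₁, h₂,
      prod_range_succ, ih]
    ring

theorem coeff_prod_one_sub_X_odd_sq_mul_evenProd {M a : ℕ} (hM : 2 * a + 2 ≤ M)
    (ha : ¬ IsSquare a) :
    ((∏ m ∈ range M, (1 - X ^ (2 * m + 1) : ℤ[X]) ^ 2) * evenProd 0 (2 * M)).coeff a = 0 := by
  rw [prod_one_sub_X_odd_sq_eq_sum_thetaTerm, sum_mul, finsetSum_coeff]
  refine sum_eq_zero fun j hj => ?_
  rw [mem_Icc] at hj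
  obtain ⟨i, hi⟩ : ∃ i : ℕ, (i : ℤ) = M + j := ⟨(M + j).toNat, Int.toNat_of_nonneg (by omega)⟩
  rw [thetaTerm, ← hi, mul_assoc, mul_assoc, coeff_C_mul, coeff_X_pow_mul']
  split_ifs with hle
  · have ht : j.natAbs ≤ a := (Nat.le_self_pow two_ne_zero _).trans hle
    rw [coeff_gaussBinom_mul_evenProd (by omega) (by omega) (by omega),
      if_neg fun h => ha ⟨j.natAbs, by rw [← sq]; omega⟩, mul_zero]
  · rw [mul_zero]

/-- By Gauss's identity, this tends to `∑_{j ∈ ℤ} (-1)^j X^(j^2)` as `N → ∞`. -/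
noncomputable def gaussProd (N : ℕ) : ℤ[X] :=
  ∏ m ∈ range N, (1 - X ^ (2 * m + 1)) ^ 2 * (1 - X ^ (2 * m + 2))

theorem coeff_gaussProd_eq_zero {N a : ℕ} (haN : a < N) (ha : ¬ IsSquare a) :
    (gaussProd N).coeff a = 0 := by
  rw [← coeff_prod_one_sub_X_odd_sq_mul_evenProd (le_refl (2 * a + 2)) ha]
  apply coeff_eq_of_truncMod_eq
  have hodd : ∀ m, a ≤ m → truncMod a ((1 - X ^ (2 * m + 1) : ℤ[X]) ^ 2) = 1 := fun m hm => by
    rw [map_pow, truncMod_one_sub_X_pow (by omega), one_pow]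
  have heven : ∀ m, a ≤ m → truncMod a (1 - X ^ (2 * m + 2) : ℤ[X]) = 1 := fun m hm =>
    truncMod_one_sub_X_pow (by omega)
  rw [gaussProd, prod_mul_distrib, evenProd, ← range_eq_Ico, map_mul, map_mul,
    truncMod_prod_range_eq _ hodd haN.le (by omega : a ≤ 2 * a + 2),
    truncMod_prod_range_eq _ heven haN.le (by omega : a ≤ 2 * (2 * a + 2))]

end GaussIdentity

theorem pow_mul_add_sub_eq_of_mul_eq_one {M : Type*} [CommMonoid M] {u v : M} (h : u * v = 1)
    {p e : ℕ} (he : e ≤ p) (k : ℕ) : v ^ (p * k + (p - e)) = u ^ e * (v ^ (k + 1)) ^ p := by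
  calc v ^ (p * k + (p - e)) = (u * v) ^ e * v ^ (p * k + (p - e)) := by rw [h, one_pow, one_mul]
    _ = u ^ e * v ^ (p * k + (p - e) + e) := by rw [mul_pow, mul_assoc, mul_comm (v ^ e), ← pow_add]
    _ = u ^ e * (v ^ (k + 1)) ^ p := by
      rw [add_assoc, Nat.sub_add_cancel he, ← pow_mul, mul_comm (k + 1), mul_add_one]

namespace PowerSeries

theorem map_invOfUnit {R S : Type*} [CommRing R] [CommRing S] (f : R →+* S) (φ : R⟦X⟧) (u : Rˣ)
    (h : constantCoeff φ = u) : map f (invOfUnit φ u) = invOfUnit (map f φ) (Units.map f u) :=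
  left_inv_eq_right_inv (by rw [← map_mul, invOfUnit_mul φ u h, map_one])
    (mul_invOfUnit _ _ (by
      rw [← coeff_zero_eq_constantCoeff_apply, coeff_map, coeff_zero_eq_constantCoeff_apply, h,
        Units.coe_map, MonoidHom.coe_coe]))

theorem coeff_pow_char_eq_zero_of_not_dvd {R : Type*} [CommRing R] {p : ℕ} [ExpChar R p] (f : R⟦X⟧)
    {i : ℕ} (h : ¬ p ∣ i) : coeff i (f ^ p) = 0 := by
  have hp := expChar_ne_zero R p
  rw [← MvPowerSeries.map_frobenius_expand p hp (f := f)]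
  change coeff i (map (frobenius R p) (expand p hp f)) = 0
  rw [coeff_map, coeff_expand_of_not_dvd p hp f h, map_zero]

theorem coeff_mul_pow_char_eq_zero {R : Type*} [CommRing R] {p : ℕ} [ExpChar R p] {f : R⟦X⟧}
    (g : R⟦X⟧) {n : ℕ} (hf : ∀ a ≤ n, a ≡ n [MOD p] → coeff a f = 0) :
    coeff n (f * g ^ p) = 0 := by
  rw [coeff_mul]
  refine sum_eq_zero fun ⟨a, b⟩ hab => ?_
  rw [HasAntidiagonal.mem_antidiagonal] at hab
  by_cases hb : p ∣ b
  · obtain ⟨c, rfl⟩ := hb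
    rw [hf a (by omega) (by rw [← hab]; exact (Nat.add_mul_mod_self_left a p c).symm), zero_mul]
  · rw [coeff_pow_char_eq_zero_of_not_dvd g hb, mul_zero]

end PowerSeries

section ColorPartModP

open PowerSeries

theorem intCast_colorPart (A : Type*) [CommRing A] (r s n : ℕ) :
    (colorPart r s n : A) = coeff n (∏ m ∈ range (n + 1),
      invOfUnit (1 - X ^ (2 * m + 1) : A⟦X⟧) 1 ^ s
        * invOfUnit (1 - X ^ (2 * m + 2) : A⟦X⟧) 1 ^ r) := by
  rw [colorPart, ← eq_intCast (Int.castRingHom A), ← coeff_map, map_prod]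
  congr 1
  refine prod_congr rfl fun m _ => ?_
  simp [map_invOfUnit _ _ _ (by simp : constantCoeff (1 - X ^ (2 * m + 1) : ℤ⟦X⟧) = ↑(1 : ℤˣ)),
    map_invOfUnit _ _ _ (by simp : constantCoeff (1 - X ^ (2 * m + 2) : ℤ⟦X⟧) = ↑(1 : ℤˣ))]

theorem prod_invOfUnit_pow_eq_mul_pow (A : Type*) [CommRing A] {p : ℕ} (hp : 2 ≤ p) (N k l : ℕ) :
    ∏ m ∈ range N, invOfUnit (1 - X ^ (2 * m + 1) : A⟦X⟧) 1 ^ (p * k + (p - 2))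
      * invOfUnit (1 - X ^ (2 * m + 2) : A⟦X⟧) 1 ^ (p * l + (p - 1))
    = ((gaussProd N).map (Int.castRingHom A) : A⟦X⟧) * (∏ m ∈ range N,
      invOfUnit (1 - X ^ (2 * m + 1) : A⟦X⟧) 1 ^ (k + 1)
        * invOfUnit (1 - X ^ (2 * m + 2) : A⟦X⟧) 1 ^ (l + 1)) ^ p := by
  have hinv : ∀ c, c ≠ 0 → (1 - X ^ c : A⟦X⟧) * invOfUnit (1 - X ^ c) 1 = 1 := fun c hc =>
    mul_invOfUnit _ _ (by simp [zero_pow hc])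
  rw [← prod_pow, gaussProd, Polynomial.map_prod, ← Polynomial.coeToPowerSeries.ringHom_apply,
    map_prod, ← prod_mul_distrib]
  refine prod_congr rfl fun m _ => ?_
  rw [pow_mul_add_sub_eq_of_mul_eq_one (hinv _ (by omega)) hp,
    pow_mul_add_sub_eq_of_mul_eq_one (hinv _ (by omega)) (by omega : 1 ≤ p)]
  simp only [pow_one, Polynomial.map_mul, Polynomial.map_pow, Polynomial.map_sub,
    Polynomial.map_one, Polynomial.map_X, Polynomial.coeToPowerSeries.ringHom_apply,
    Polynomial.coe_mul, Polynomial.coe_pow, Polynomial.coe_sub, Polynomial.coe_one,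
    Polynomial.coe_X]
  ring

end ColorPartModP

theorem stmt9_general (p : ℕ) (hp : p.Prime)
    (r : ℕ)
    (hqnr : ∀ x : ℤ, ¬ x ^ 2 ≡ (r : ℕ) [ZMOD p])
    (n j k : ℕ) :
    colorPart (p * (k - j) + (p - 1)) (p * k + (p - 2)) (p * n + r) ≡ 0 [ZMOD p] := by
  have := Fact.mk hp
  rw [← ZMod.intCast_eq_intCast_iff, Int.cast_zero, intCast_colorPart,
    prod_invOfUnit_pow_eq_mul_pow _ hp.two_le]
  refine PowerSeries.coeff_mul_pow_char_eq_zero _ fun a ha hmod => ?_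
  rw [Polynomial.coeff_coe, Polynomial.coeff_map, coeff_gaussProd_eq_zero (by omega), map_zero]
  rintro ⟨t, rfl⟩
  apply hqnr t
  rw [← ZMod.intCast_eq_intCast_iff]
  have hmod' := (ZMod.natCast_eq_natCast_iff _ _ _).mpr hmod
  push_cast [ZMod.natCast_self] at hmod' ⊢
  simpa [sq] using hmod'

theorem stmt9 (p : ℕ) (hp : p.Prime) (hp5 : 5 ≤ p)
    (r : ℕ) (hr1 : 1 ≤ r) (hr2 : r ≤ p - 1)
    (hqnr : ∀ x : ℤ, ¬ x ^ 2 ≡ (r : ℕ) [ZMOD p])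
    (n j k : ℕ) (hjk : j ≤ k) :
    colorPart (p * (k - j) + (p - 1)) (p * k + (p - 2)) (p * n + r) ≡ 0 [ZMOD p] :=
  stmt9_general p hp r hqnr n j k
end
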